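/- Let X be a complex Banach space. Then the set M := {T ∈ L(X) : δ(T) > 1 and ker T ≠ {0}} is open in L(X) with respect to the operator-norm topology. -/

import Mathlib

open Filter Topology Metric
open scoped ENNReal

noncomputable section

namespace JClassPaper

variable {X : Type*} [NormedAddCommGroup X] [NormedSpace ℂ X]

/-- The Banach-space adjoint `T* φ = φ ∘ T` of a bounded operator. -/
def adj (T : X →L[ℂ] X) : StrongDual ℂ X →L[ℂ] StrongDual ℂ X :=
  (ContinuousLinearMap.compL ℂ X X ℂ).flip T

/-- The point spectrum (set of eigenvalues). -/
def pointSpectrum (T : X →L[ℂ] X) : Set ℂ := {z | ∃ x : X, x ≠ 0 ∧ T x = z • x}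

/-- `T` is tauberian if `(T**)⁻¹(j_X(X)) ⊆ j_X(X)`. -/
def Tauberian (T : X →L[ℂ] X) : Prop :=
  ∀ F : StrongDual ℂ (StrongDual ℂ X),
    adj (adj T) F ∈ Set.range (NormedSpace.inclusionInDoubleDual ℂ X) →
      F ∈ Set.range (NormedSpace.inclusionInDoubleDual ℂ X)

/-- Fredholm: finite-dimensional kernel, closed range of finite codimension. -/
def Fredholm (T : X →L[ℂ] X) : Prop :=
  FiniteDimensional ℂ (LinearMap.ker (T : X →ₗ[ℂ] X)) ∧ IsClosed (LinearMap.range (T : X →ₗ[ℂ] X) : Set X) ∧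
    FiniteDimensional ℂ (X ⧸ LinearMap.range (T : X →ₗ[ℂ] X))

/-- The essential spectrum. -/
def essSpectrum (T : X →L[ℂ] X) : Set ℂ := {z | ¬ Fredholm (T - z • (1 : X →L[ℂ] X))}

/-- The J-set of `x` under `T`. -/
def JSet (T : X →L[ℂ] X) (x : X) : Set X :=
  {y | ∃ k : ℕ → ℕ, StrictMono k ∧ ∃ u : ℕ → X,
    Tendsto u atTop (𝓝 x) ∧ Tendsto (fun n => (T ^ k n) (u n)) atTop (𝓝 y)}

/-- The mixing J-set of `x` under `T`. -/
def JMixSet (T : X →L[ℂ] X) (x : X) : Set X :=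
  {y | ∃ u : ℕ → X, Tendsto u atTop (𝓝 x) ∧ Tendsto (fun n => (T ^ n) (u n)) atTop (𝓝 y)}

/-- `T` is J-class if `J_T(x) = X` for some `x ≠ 0`. -/
def JClass (T : X →L[ℂ] X) : Prop := ∃ x : X, x ≠ 0 ∧ JSet T x = Set.univ

/-- `T` is J^mix-class if `J^mix_T(x) = X` for some `x ≠ 0`. -/
def JMixClass (T : X →L[ℂ] X) : Prop := ∃ x : X, x ≠ 0 ∧ JMixSet T x = Set.univ

/-- A Banach space is a Grothendieck space if weak*-null sequences in the dual are weakly null. -/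
def Grothendieck (X : Type*) [NormedAddCommGroup X] [NormedSpace ℂ X] : Prop :=
  ∀ φ : ℕ → StrongDual ℂ X,
    (∀ x : X, Tendsto (fun n => φ n x) atTop (𝓝 (0 : ℂ))) →
    ∀ F : StrongDual ℂ (StrongDual ℂ X),
      Tendsto (fun n => F (φ n)) atTop (𝓝 (0 : ℂ))

/-- The surjectivity modulus `s(T) = sup {r ≥ 0 : T(B_X) ⊇ r·B_X}`. -/
def smod (T : X →L[ℂ] X) : ℝ :=
  sSup {r : ℝ | 0 ≤ r ∧ closedBall (0 : X) r ⊆ T '' closedBall 0 1}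

/-- `δ(T) = lim_n s(Tⁿ)^{1/n} = sup_n s(Tⁿ)^{1/n}` (by supermultiplicativity of `s`). -/
def dmod (T : X →L[ℂ] X) : ℝ := ⨆ n : ℕ, smod (T ^ (n + 1)) ^ ((1 : ℝ) / (n + 1))

/-- The injectivity modulus `κ(T) = inf {‖Tx‖ : ‖x‖ = 1}`. -/
def kmod (T : X →L[ℂ] X) : ℝ := sInf {r : ℝ | ∃ x : X, ‖x‖ = 1 ∧ r = ‖T x‖}

/-- `i(T) = lim_n κ(Tⁿ)^{1/n} = sup_n κ(Tⁿ)^{1/n}` (by supermultiplicativity of `κ`). -/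
def imod (T : X →L[ℂ] X) : ℝ := ⨆ n : ℕ, kmod (T ^ (n + 1)) ^ ((1 : ℝ) / (n + 1))

/-- The space `l∞` of bounded complex sequences. -/
abbrev linf := lp (fun _ : ℕ => ℂ) ∞

/-- The space `l¹` of absolutely summable complex sequences. -/
abbrev lone := lp (fun _ : ℕ => ℂ) 1

/-- `T ∈ L(l∞)` is the adjoint of `S ∈ L(l¹)`: `⟪Tx, y⟫ = ⟪x, Sy⟫` for all `x, y`. -/
def IsAdjointOf (T : linf →L[ℂ] linf) (S : lone →L[ℂ] lone) : Prop :=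
  ∀ (x : linf) (y : lone), ∑' n, (T x) n * y n = ∑' n, x n * (S y) n

/-- `c₀`, the subspace of `l∞` of null sequences. -/
def c0 : Submodule ℂ linf where
  carrier := {x | Tendsto (fun n => x n) atTop (𝓝 (0 : ℂ))}
  add_mem' := by
    intro a b ha hb
    have h := ha.add hb
    simp only [Set.mem_setOf_eq] at *
    simpa [lp.coeFn_add, Pi.add_apply] using h
  zero_mem' := by
    simp only [Set.mem_setOf_eq]
    simpa [lp.coeFn_zero] using (tendsto_const_nhds : Tendsto (fun _ : ℕ => (0:ℂ)) atTop (𝓝 0))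
  smul_mem' := by
    intro c a ha
    simp only [Set.mem_setOf_eq] at *
    have h := ha.const_mul c
    simpa [lp.coeFn_smul, Pi.smul_apply, smul_eq_mul] using h

/-! If `A (B_X) ⊇ r • B_X` and `‖B - A‖ = ε < r`, then `A`-preimages are `B`-preimages up to a
relative error `ε / r`, and correcting the residual iteratively gives `B (B_X) ⊇ (r - ε) • B_X`.
Solving `B w = B x₀ = (B - A) x₀` for a kernel vector `x₀` of `A` then gives a kernel vector
`x₀ - w` of `B` with `‖w‖ ≤ ε ‖x₀‖ / (r - ε) < ‖x₀‖` once `ε < r / 2`. So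
`{A | 1 < s(A), ker A ≠ 0}` is open. As `δ(T) > 1` iff `s(Tⁿ) > 1` for some `n`, and
`ker Tⁿ ≠ 0` iff `ker T ≠ 0`, the set of the theorem is the union over `n` of the preimages of
this open set under the continuous maps `T ↦ Tⁿ`. -/

section Perturbation

variable {𝕜 E F : Type*} [RCLike 𝕜] [NormedAddCommGroup E] [NormedSpace 𝕜 E]
  [NormedAddCommGroup F] [NormedSpace 𝕜 F]

theorem closedBall_subset_image_closedBall_iff (f : E →L[𝕜] F) {r : ℝ} (hr : 0 < r) :
    closedBall (0 : F) r ⊆ f '' closedBall 0 1 ↔ ∀ y, ∃ x, f x = y ∧ r * ‖x‖ ≤ ‖y‖ := by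
  constructor
  · intro h y
    rcases eq_or_ne y 0 with rfl | hy
    · exact ⟨0, map_zero f, by simp⟩
    have hy' : 0 < ‖y‖ := norm_pos_iff.2 hy
    have hmem : ((r / ‖y‖ : ℝ) : 𝕜) • y ∈ closedBall (0 : F) r := by
      rw [mem_closedBall_zero_iff, norm_smul, RCLike.norm_ofReal, abs_of_pos (by positivity),
        div_mul_cancel₀ _ hy'.ne']
    obtain ⟨x, hx, hfx⟩ := h hmem
    refine ⟨((‖y‖ / r : ℝ) : 𝕜) • x, ?_, ?_⟩
    · rw [map_smul, hfx, smul_smul, ← RCLike.ofReal_mul, div_mul_div_cancel₀ hr.ne',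
        div_self hy'.ne', RCLike.ofReal_one, one_smul]
    · rw [norm_smul, RCLike.norm_ofReal, abs_of_pos (by positivity), ← mul_assoc,
        mul_div_cancel₀ _ hr.ne']
      exact mul_le_of_le_one_right hy'.le (mem_closedBall_zero_iff.1 hx)
  · intro h y hy
    obtain ⟨x, rfl, hx⟩ := h y
    refine ⟨x, mem_closedBall_zero_iff.2 ?_, rfl⟩
    exact le_of_mul_le_mul_left (by simpa using hx.trans (mem_closedBall_zero_iff.1 hy)) hr

theorem exists_preimage_of_approx [CompleteSpace E] (f : E →L[𝕜] F) {q c : ℝ} (hq0 : 0 ≤ q)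
    (hq1 : q < 1) (hc : 0 < c) (h : ∀ y, ∃ x, ‖f x - y‖ ≤ q * ‖y‖ ∧ c * ‖x‖ ≤ ‖y‖) (y : F) :
    ∃ x, f x = y ∧ (1 - q) * c * ‖x‖ ≤ ‖y‖ := by
  choose g hg_approx hg_norm using h
  set e : ℕ → F := fun n => (fun z => z - f (g z))^[n] y
  have he_succ (n : ℕ) : e (n + 1) = e n - f (g (e n)) := Function.iterate_succ_apply' _ n y
  have he_norm (n : ℕ) : ‖e n‖ ≤ q ^ n * ‖y‖ := by
    induction n with
    | zero => simp [e]
    | succ n ih =>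
      calc ‖e (n + 1)‖ = ‖f (g (e n)) - e n‖ := by rw [he_succ, norm_sub_rev]
        _ ≤ q * ‖e n‖ := hg_approx _
        _ ≤ q * (q ^ n * ‖y‖) := by gcongr
        _ = q ^ (n + 1) * ‖y‖ := by ring
  have hu_norm (n : ℕ) : ‖g (e n)‖ ≤ q ^ n * (‖y‖ / c) := by
    rw [← mul_div_assoc, le_div_iff₀ hc, mul_comm]
    exact (hg_norm _).trans (he_norm n)
  have hgeom := (hasSum_geometric_of_lt_one hq0 hq1).mul_right (‖y‖ / c)
  have hu_sum : Summable fun n => g (e n) := hgeom.summable.of_norm_bounded hu_norm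
  have he_lim : Tendsto e atTop (𝓝 0) := squeeze_zero_norm he_norm <| by
    simpa using (tendsto_pow_atTop_nhds_zero_of_lt_one hq0 hq1).mul_const ‖y‖
  have hpartial : Tendsto (fun n => ∑ k ∈ Finset.range n, f (g (e k))) atTop (𝓝 y) := by
    have htel (n : ℕ) : ∑ k ∈ Finset.range n, f (g (e k)) = y - e n := by
      simp_rw [show ∀ k, f (g (e k)) = e k - e (k + 1) by intro k; rw [he_succ]; abel]
      exact Finset.sum_range_sub' e n
    simpa [htel] using tendsto_const_nhds.sub he_lim
  refine ⟨∑' n, g (e n), tendsto_nhds_unique (hu_sum.hasSum.mapL f).tendsto_sum_nat hpartial, ?_⟩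
  have hsum_le := tsum_of_norm_bounded hgeom hu_norm
  rw [inv_mul_eq_div, div_div, le_div_iff₀ (by nlinarith)] at hsum_le
  linarith

theorem exists_preimage_of_norm_sub_lt [CompleteSpace E] {A B : E →L[𝕜] F} {r : ℝ}
    (hA : ∀ y, ∃ x, A x = y ∧ r * ‖x‖ ≤ ‖y‖) (hAB : ‖B - A‖ < r) (y : F) :
    ∃ x, B x = y ∧ (r - ‖B - A‖) * ‖x‖ ≤ ‖y‖ := by
  have hr : 0 < r := (norm_nonneg _).trans_lt hAB
  have happrox (y : F) : ∃ x, ‖B x - y‖ ≤ ‖B - A‖ / r * ‖y‖ ∧ r * ‖x‖ ≤ ‖y‖ := by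
    obtain ⟨x, rfl, hx⟩ := hA y
    refine ⟨x, ?_, hx⟩
    calc ‖B x - A x‖ = ‖(B - A) x‖ := rfl
      _ ≤ ‖B - A‖ * ‖x‖ := (B - A).le_opNorm x
      _ ≤ ‖B - A‖ / r * ‖A x‖ := by
        rw [div_mul_eq_mul_div, le_div_iff₀ hr, mul_assoc]; gcongr; linarith
  obtain ⟨x, hx, hx_norm⟩ := exists_preimage_of_approx B (by positivity)
    ((div_lt_one hr).2 hAB) hr happrox y
  refine ⟨x, hx, ?_⟩
  rwa [sub_mul, div_mul_cancel₀ _ hr.ne', one_mul] at hx_norm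

theorem ker_ne_bot_of_norm_sub_lt {A B : E →L[𝕜] F} {c : ℝ}
    (hB : ∀ y, ∃ x, B x = y ∧ c * ‖x‖ ≤ ‖y‖) (hAB : ‖B - A‖ < c)
    (hA : LinearMap.ker (A : E →ₗ[𝕜] F) ≠ ⊥) : LinearMap.ker (B : E →ₗ[𝕜] F) ≠ ⊥ := by
  obtain ⟨x₀, hx₀, hx₀_ne⟩ := Submodule.exists_mem_ne_zero_of_ne_bot hA
  obtain ⟨w, hw, hw_norm⟩ := hB (B x₀)
  refine (Submodule.ne_bot_iff _).2 ⟨x₀ - w, by simp [hw], sub_ne_zero.2 fun hx₀w => ?_⟩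
  have hBx₀ : B x₀ = (B - A) x₀ := by
    rw [sub_apply, show A x₀ = 0 from hx₀, sub_zero]
  have : c * ‖x₀‖ ≤ ‖B - A‖ * ‖x₀‖ := by
    rw [← hx₀w, hBx₀] at hw_norm
    exact hw_norm.trans ((B - A).le_opNorm x₀)
  exact (mul_lt_mul_of_pos_right hAB (norm_pos_iff.2 hx₀_ne)).not_ge this

end Perturbation

theorem nontrivial_of_ker_ne_bot {R M N : Type*} [Ring R] [AddCommGroup M] [AddCommGroup N]
    [Module R M] [Module R N] {f : M →ₗ[R] N} (h : LinearMap.ker f ≠ ⊥) : Nontrivial M :=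
  have ⟨x, _, hx⟩ := Submodule.exists_mem_ne_zero_of_ne_bot h
  nontrivial_of_ne x 0 hx

theorem ker_pow_succ_ne_bot_iff {𝕜 E : Type*} [Ring 𝕜] [AddCommGroup E] [Module 𝕜 E]
    [TopologicalSpace E] (T : E →L[𝕜] E) (n : ℕ) :
    LinearMap.ker ((T ^ (n + 1) : E →L[𝕜] E) : E →ₗ[𝕜] E) ≠ ⊥ ↔
      LinearMap.ker (T : E →ₗ[𝕜] E) ≠ ⊥ := by
  rw [ne_eq, ne_eq, not_iff_not, LinearMap.ker_eq_bot, LinearMap.ker_eq_bot,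
    ContinuousLinearMap.coe_coe, ContinuousLinearMap.coe_coe, FunLike.coe_pow_eq_iterate]
  exact ⟨fun h => (Function.iterate_succ T n ▸ h).of_comp, fun h => h.iterate _⟩

theorem smod_nonneg (T : X →L[ℂ] X) : 0 ≤ smod T :=
  Real.sSup_nonneg fun _ hr => hr.1

theorem le_norm_of_closedBall_subset_image [Nontrivial X] {T : X →L[ℂ] X} {r : ℝ} (hr : 0 ≤ r)
    (h : closedBall (0 : X) r ⊆ T '' closedBall 0 1) : r ≤ ‖T‖ := by
  obtain ⟨y, hy⟩ := exists_norm_eq X hr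
  obtain ⟨x, hx, rfl⟩ := h (mem_closedBall_zero_iff.2 hy.le)
  rw [← hy]
  exact T.le_of_opNorm_le_of_le le_rfl (mem_closedBall_zero_iff.1 hx) |>.trans (mul_one _).le

theorem smod_le_norm [Nontrivial X] (T : X →L[ℂ] X) : smod T ≤ ‖T‖ :=
  Real.sSup_le (fun _ hr => le_norm_of_closedBall_subset_image hr.1 hr.2) (norm_nonneg T)

theorem le_smod [Nontrivial X] {T : X →L[ℂ] X} {r : ℝ} (hr : 0 < r)
    (h : ∀ y, ∃ x, T x = y ∧ r * ‖x‖ ≤ ‖y‖) : r ≤ smod T :=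
  le_csSup ⟨‖T‖, fun _ hs => le_norm_of_closedBall_subset_image hs.1 hs.2⟩
    ⟨hr.le, (closedBall_subset_image_closedBall_iff T hr).2 h⟩

theorem exists_one_lt_of_one_lt_smod {T : X →L[ℂ] X} (h : 1 < smod T) :
    ∃ r, 1 < r ∧ ∀ y, ∃ x, T x = y ∧ r * ‖x‖ ≤ ‖y‖ := by
  have hzero : (0 : ℝ) ∈ {r : ℝ | 0 ≤ r ∧ closedBall (0 : X) r ⊆ T '' closedBall 0 1} :=
    ⟨le_rfl, by rw [closedBall_zero, Set.singleton_subset_iff]; exact ⟨0, by simp, map_zero T⟩⟩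
  obtain ⟨r, ⟨-, hr⟩, hr1⟩ := exists_lt_of_lt_csSup ⟨0, hzero⟩ h
  exact ⟨r, hr1, (closedBall_subset_image_closedBall_iff T (one_pos.trans hr1)).1 hr⟩

theorem one_lt_dmod_iff [Nontrivial X] {T : X →L[ℂ] X} :
    1 < dmod T ↔ ∃ n : ℕ, 1 < smod (T ^ (n + 1)) := by
  have hroot_le (n : ℕ) : smod (T ^ (n + 1)) ^ ((1 : ℝ) / (n + 1)) ≤ ‖T‖ := by
    calc smod (T ^ (n + 1)) ^ ((1 : ℝ) / (n + 1)) ≤ (‖T‖ ^ (n + 1)) ^ ((1 : ℝ) / (n + 1)) :=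
          Real.rpow_le_rpow (smod_nonneg _) ((smod_le_norm _).trans (norm_pow_le' T n.succ_pos))
            (by positivity)
      _ = ‖T‖ := by
          rw [one_div, ← Nat.cast_succ]
          exact Real.pow_rpow_inv_natCast (norm_nonneg T) n.succ_ne_zero
  constructor
  · intro h
    by_contra! hle
    refine h.not_ge (ciSup_le fun n => ?_)
    exact Real.rpow_le_one (smod_nonneg _) (hle n) (by positivity)
  · rintro ⟨n, hn⟩
    refine lt_of_lt_of_le ?_ (le_ciSup ⟨‖T‖, Set.forall_mem_range.2 hroot_le⟩ n)
    exact Real.one_lt_rpow hn (by positivity)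

theorem isOpen_setOf_one_lt_smod_and_ker_ne_bot [CompleteSpace X] :
    IsOpen {A : X →L[ℂ] X | 1 < smod A ∧ LinearMap.ker (A : X →ₗ[ℂ] X) ≠ ⊥} := by
  rw [Metric.isOpen_iff]
  rintro A ⟨hA_smod, hA_ker⟩
  have := nontrivial_of_ker_ne_bot hA_ker
  obtain ⟨r, hr1, hA⟩ := exists_one_lt_of_one_lt_smod hA_smod
  refine ⟨min (r - 1) (r / 2), by positivity, fun B hB => ?_⟩
  rw [mem_ball, dist_eq_norm, lt_min_iff] at hB
  obtain ⟨hAB₁, hAB₂⟩ := hB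
  have hB := exists_preimage_of_norm_sub_lt hA (by linarith)
  exact ⟨by linarith [le_smod (by linarith) hB], ker_ne_bot_of_norm_sub_lt hB (by linarith) hA_ker⟩

theorem setOf_one_lt_dmod_and_ker_ne_bot_eq_iUnion :
    {T : X →L[ℂ] X | 1 < dmod T ∧ LinearMap.ker (T : X →ₗ[ℂ] X) ≠ ⊥} =
      ⋃ n : ℕ, (· ^ (n + 1)) ⁻¹'
        {A : X →L[ℂ] X | 1 < smod A ∧ LinearMap.ker (A : X →ₗ[ℂ] X) ≠ ⊥} := by
  ext T
  simp only [Set.mem_ofPred_eq, Set.mem_iUnion, Set.mem_preimage, ker_pow_succ_ne_bot_iff]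
  constructor
  · rintro ⟨hd, hk⟩
    have := nontrivial_of_ker_ne_bot hk
    obtain ⟨n, hn⟩ := one_lt_dmod_iff.1 hd
    exact ⟨n, hn, hk⟩
  · rintro ⟨n, hn, hk⟩
    have := nontrivial_of_ker_ne_bot hk
    exact ⟨one_lt_dmod_iff.2 ⟨n, hn⟩, hk⟩

/-- the set `{T ∈ L(X) : δ(T) > 1 and ker T ≠ {0}}` is open in the operator
norm topology. -/
theorem stmt12 {X : Type*} [NormedAddCommGroup X] [NormedSpace ℂ X] [CompleteSpace X] :
    IsOpen {T : X →L[ℂ] X | 1 < dmod T ∧ LinearMap.ker (T : X →ₗ[ℂ] X) ≠ ⊥} := by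
  rw [setOf_one_lt_dmod_and_ker_ne_bot_eq_iUnion]
  exact isOpen_iUnion fun n =>
    isOpen_setOf_one_lt_smod_and_ker_ne_bot.preimage (continuous_pow (n + 1))

end JClassPaper
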